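/- Let v_1,…,v_m be monomials in K[x_2,…,x_n] (not involving x_1), let a be a positive integer, and set I = (x_1^a v_1, v_2,…,v_m) and I' = (x_1^{a+1} v_1, v_2,…,v_m). Let g ∈ ℕ^n with x^g = lcm(x_1^a v_1, v_2,…,v_m) (so g(1) = a) and g' = g + e_1. Suppose P_I^g = ⋃_{i=1}^r [c_i, d_i] is a partition of P_I^g into pairwise disjoint intervals. Define c'_i = c_i if c_i(1) < a and c'_i = c_i + e_1 if c_i(1) = a, and define d'_i = d_i if d_i(1) < a−1 and d'_i = d_i + e_1 if d_i(1) ≥ a−1. Then ⋃_{i=1}^r [c'_i, d'_i] is a partition of P_{I'}^{g'} into pairwise disjoint intervals, and ρ_{g'}(d'_i) = ρ_g(d_i) for all i ∈ [r]. -/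

import Mathlib

/-- The set `P_I^g` of the characteristic poset of the monomial ideal
`I = (w₁, v_1, …, v_m)` (identifying monomials with their exponent vectors):
all `σ ≤ g` such that some generator divides `x^σ`. -/
def charPoset {n m : ℕ} (w₁ : Fin n → ℕ) (v : Fin m → Fin n → ℕ)
    (g : Fin n → ℕ) : Set (Fin n → ℕ) :=
  {σ | σ ≤ g ∧ (w₁ ≤ σ ∨ ∃ i, v i ≤ σ)}

/-- `ρ_g(d) = #{j : d j = g j}`. -/
def rho {n : ℕ} (g d : Fin n → ℕ) : ℕ :=
  (Finset.univ.filter fun j => d j = g j).card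

/-!
Let `κ = collapseAt z a : ℕⁿ → ℕⁿ` (`z` the first index) lower the first coordinate by one
on the layers `σ(1) ≥ a`, merging the layers `a` and `a + 1`. Since `v₁, …, v_m` do not
involve `x₁` and `g(1) = a > 0`, one checks coordinatewise that `κ⁻¹(P_I^g) = P_{I'}^{g'}` and
`κ⁻¹[cᵢ, dᵢ] = [c'ᵢ, d'ᵢ]`. Preimages of a partition form a partition, and `d'ᵢ(1) = g'(1)`
exactly when `dᵢ(1) = g(1)`.
-/

def collapse (a k : ℕ) : ℕ := if a ≤ k then k - 1 else k

lemma le_collapse_iff {a : ℕ} (ha : 0 < a) (c k : ℕ) :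
    c ≤ collapse a k ↔ (if c < a then c else c + 1) ≤ k := by
  unfold collapse; split_ifs <;> omega

lemma collapse_le_iff (a d k : ℕ) :
    collapse a k ≤ d ↔ k ≤ (if d < a - 1 then d else d + 1) := by
  unfold collapse; split_ifs <;> omega

section CollapseAt

variable {ι : Type*} [DecidableEq ι] (z : ι)

def collapseAt (a : ℕ) (τ : ι → ℕ) : ι → ℕ := Function.update τ z (collapse a (τ z))

lemma le_collapseAt_iff {a : ℕ} (ha : 0 < a) (σ τ : ι → ℕ) :
    σ ≤ collapseAt z a τ ↔ (if σ z < a then σ else σ + Pi.single z 1) ≤ τ := by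
  simp only [Pi.le_def]
  refine forall_congr' fun j => ?_
  rcases eq_or_ne j z with rfl | hj
  · simp only [collapseAt, Function.update_self, le_collapse_iff ha, apply_ite (fun f : ι → ℕ => f j),
      Pi.add_apply, Pi.single_eq_same]
  · simp [collapseAt, hj, apply_ite (fun f : ι → ℕ => f j)]

lemma collapseAt_le_iff {a : ℕ} (δ τ : ι → ℕ) :
    collapseAt z a τ ≤ δ ↔ τ ≤ (if δ z < a - 1 then δ else δ + Pi.single z 1) := by
  simp only [Pi.le_def]
  refine forall_congr' fun j => ?_
  rcases eq_or_ne j z with rfl | hj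
  · simp only [collapseAt, Function.update_self, collapse_le_iff, apply_ite (fun f : ι → ℕ => f j),
      Pi.add_apply, Pi.single_eq_same]
  · simp [collapseAt, hj, apply_ite (fun f : ι → ℕ => f j)]

lemma preimage_collapseAt_Icc {a : ℕ} (ha : 0 < a) (c d : ι → ℕ) :
    collapseAt z a ⁻¹' Set.Icc c d =
      Set.Icc (if c z < a then c else c + Pi.single z 1)
        (if d z < a - 1 then d else d + Pi.single z 1) := by
  ext τ
  simp only [Set.mem_preimage, Set.mem_Icc, le_collapseAt_iff z ha, collapseAt_le_iff]

end CollapseAt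

lemma preimage_collapseAt_charPoset {n m a : ℕ} (ha : 0 < a) (z : Fin n) (v₁ : Fin n → ℕ)
    (v : Fin m → Fin n → ℕ) (hv₁ : v₁ z = 0) (hv : ∀ i, v i z = 0) (g : Fin n → ℕ)
    (hgz : g z = a) :
    collapseAt z a ⁻¹' charPoset (a • Pi.single z 1 + v₁) v g =
      charPoset ((a + 1) • Pi.single z 1 + v₁) v (g + Pi.single z 1) := by
  ext τ
  have hw : (a • Pi.single z 1 + v₁ : Fin n → ℕ) z = a := by simp [hv₁]
  simp only [Set.mem_preimage, charPoset, Set.mem_ofPred_eq, le_collapseAt_iff z ha,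
    collapseAt_le_iff, hgz, hw, hv, ha, lt_irrefl, if_false, if_true,
    show ¬ a < a - 1 by omega, add_smul, one_smul, add_right_comm _ v₁]

lemma rho_add_single {n a : ℕ} (z : Fin n) (g d : Fin n → ℕ) (hgz : g z = a) :
    rho (g + Pi.single z 1) (if d z < a - 1 then d else d + Pi.single z 1) = rho g d := by
  unfold rho
  congr 1
  refine Finset.filter_congr fun j _ => ?_
  rcases eq_or_ne j z with rfl | hj
  · simp only [apply_ite (fun f : Fin n → ℕ => f j), Pi.add_apply, Pi.single_eq_same, hgz]
    split_ifs <;> omega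
  · simp [apply_ite (fun f : Fin n → ℕ => f j), hj]

/-- Transfer of a partition of `P_I^g` to a partition of `P_{I'}^{g'}`, where
`I = (x₁^a v₁, v₂, …, v_m)`, `I' = (x₁^{a+1} v₁, v₂, …, v_m)`, `x^g = lcm` of the
generators of `I` and `g' = g + e₁`:  setting `c'ᵢ = cᵢ` if `cᵢ(1) < a`, `cᵢ + e₁`
if `cᵢ(1) = a`, and `d'ᵢ = dᵢ` if `dᵢ(1) < a - 1`, `dᵢ + e₁` if `dᵢ(1) ≥ a - 1`,
the intervals `[c'ᵢ, d'ᵢ]` partition `P_{I'}^{g'}` and `ρ_{g'}(d'ᵢ) = ρ_g(dᵢ)`. -/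
theorem partition_transfer_up (n : ℕ) (hn : 2 ≤ n)
    (m : ℕ) (v₁ : Fin n → ℕ) (v : Fin m → Fin n → ℕ)
    (hv₁ : v₁ ⟨0, by omega⟩ = 0) (hv : ∀ i, v i ⟨0, by omega⟩ = 0)
    (a : ℕ) (ha : 0 < a)
    (e₁ : Fin n → ℕ) (he₁ : e₁ = fun j => if j = (⟨0, by omega⟩ : Fin n) then 1 else 0)
    (g : Fin n → ℕ)
    (hg : ∀ j, g j = max ((a • e₁ + v₁) j) (Finset.univ.sup fun i => v i j))
    (r : ℕ) (c d : Fin r → (Fin n → ℕ))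
    (hcover : (⋃ i, Set.Icc (c i) (d i)) = charPoset (a • e₁ + v₁) v g)
    (hdisj : Pairwise (Function.onFun Disjoint fun i => Set.Icc (c i) (d i)))
    (c' d' : Fin r → (Fin n → ℕ))
    (hc' : ∀ i, c' i = if c i ⟨0, by omega⟩ < a then c i else c i + e₁)
    (hd' : ∀ i, d' i = if d i ⟨0, by omega⟩ < a - 1 then d i else d i + e₁) :
    (⋃ i, Set.Icc (c' i) (d' i)) = charPoset ((a + 1) • e₁ + v₁) v (g + e₁) ∧
    Pairwise (Function.onFun Disjoint fun i => Set.Icc (c' i) (d' i)) ∧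
    ∀ i, rho (g + e₁) (d' i) = rho g (d i) := by
  set z : Fin n := ⟨0, by omega⟩
  obtain rfl : e₁ = Pi.single z 1 := he₁ ▸ funext fun j => (Pi.single_apply z 1 j).symm
  have hgz : g z = a := by
    rw [hg z, (Finset.sup_eq_bot_iff _ _).2 fun i _ => hv i]
    simp [hv₁]
  have hIcc : ∀ i, Set.Icc (c' i) (d' i) = collapseAt z a ⁻¹' Set.Icc (c i) (d i) := by
    intro i
    rw [hc', hd', preimage_collapseAt_Icc z ha]
  refine ⟨?_, fun i j hij => ?_, fun i => ?_⟩
  · simp only [hIcc, ← Set.preimage_iUnion, hcover,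
      preimage_collapseAt_charPoset ha z v₁ v hv₁ hv g hgz]
  · simpa only [Function.onFun, hIcc] using (hdisj hij).preimage (collapseAt z a)
  · rw [hd', rho_add_single z g (d i) hgz]
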